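/- For every morphism α of the free partially commutative monoid M(E, I) (viewed as a one-object category), the comma category 𝔉M(E,I)/α is a partially ordered set whose elements may be identified with triples (x, β, y) of elements of M(E,I) satisfying x·β·y = α. -/

import Mathlib

open CategoryTheory

universe u

def pcRel (E : Type u) (I : E → E → Prop) : FreeMonoid E → FreeMonoid E → Prop :=
  fun w₁ w₂ => ∃ a b : E, I a b ∧
    w₁ = FreeMonoid.of a * FreeMonoid.of b ∧ w₂ = FreeMonoid.of b * FreeMonoid.of a

def pcCon (E : Type u) (I : E → E → Prop) : Con (FreeMonoid E) := conGen (pcRel E I)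

/-- The free partially commutative monoid `M(E, I)`. -/
abbrev FPCM (E : Type u) (I : E → E → Prop) : Type u := (pcCon E I).Quotient

section Mon
variable {E : Type u} {I : E → E → Prop}

open Classical in
noncomputable def pr (a b : E) : E → Bool := fun c => decide (c = a ∨ c = b)

lemma pr_iff (a b c : E) : pr a b c = true ↔ (c = a ∨ c = b) := by
  simp [pr]

/-- lists as elements of the free monoid -/
lemma ofList_cons (a : E) (l : List E) :
    FreeMonoid.ofList (a :: l) = FreeMonoid.of a * FreeMonoid.ofList l := rfl

noncomputable def projCon (I : E → E → Prop) : Con (FreeMonoid E) where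
  r u v := ∀ a b : E, (a = b ∨ ¬ I a b) →
    u.toList.filter (pr a b) = v.toList.filter (pr a b)
  iseqv := ⟨fun _ _ _ _ => rfl, fun h a b hab => (h a b hab).symm,
    fun h h' a b hab => (h a b hab).trans (h' a b hab)⟩
  mul' := by
    intro w x y z h1 h2 a b hab
    simp only [FreeMonoid.toList_mul, List.filter_append, h1 a b hab, h2 a b hab]

lemma pcCon_le_projCon (hirr : ∀ a : E, ¬ I a a) (hsym : ∀ a b : E, I a b → I b a) :
    pcCon E I ≤ projCon I := by
  apply Con.conGen_le.mpr
  rintro _ _ ⟨p, q, hpq, rfl, rfl⟩ a b hab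
  have hne : p ≠ q := fun h => hirr q (h ▸ hpq)
  have key : ¬ ((p = a ∨ p = b) ∧ (q = a ∨ q = b)) := by
    rintro ⟨hp | hp, hq | hq⟩
    · exact hne (hp.trans hq.symm)
    · rcases hab with h | h
      · exact hne (hp.trans (h.trans hq.symm))
      · subst hp; subst hq; exact h hpq
    · rcases hab with h | h
      · exact hne (hp.trans (h.symm.trans hq.symm))
      · subst hp; subst hq; exact h (hsym _ _ hpq)
    · exact hne (hp.trans hq.symm)
  show List.filter (pr a b) [p, q] = List.filter (pr a b) [q, p]
  by_cases hp : (p = a ∨ p = b) <;> by_cases hq : (q = a ∨ q = b)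
  · exact absurd ⟨hp, hq⟩ key
  all_goals simp [List.filter, pr, hp, hq]

/-- split at first occurrence -/
lemma first_occ {a : E} {l : List E} (h : a ∈ l) :
    ∃ p s, l = p ++ a :: s ∧ a ∉ p := by
  induction l with
  | nil => cases h
  | cons c t ih =>
    by_cases hc : c = a
    · exact ⟨[], t, by simp [hc], by simp⟩
    · have hat : a ∈ t := (List.mem_cons.mp h).resolve_left (fun h' => hc h'.symm)
      obtain ⟨p, s, rfl, hp⟩ := ih hat
      refine ⟨c :: p, s, rfl, ?_⟩
      simp only [List.mem_cons, not_or]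
      exact ⟨fun h' => hc h'.symm, hp⟩

lemma swap_front (hsym : ∀ a b : E, I a b → I b a) (a : E) (s : List E) :
    ∀ p : List E, (∀ b ∈ p, I a b) →
    pcCon E I (FreeMonoid.ofList (p ++ a :: s)) (FreeMonoid.ofList (a :: (p ++ s))) := by
  intro p
  induction p with
  | nil => intro _; exact (pcCon E I).refl _
  | cons c t ih =>
    intro hp
    have h1 : pcCon E I (FreeMonoid.ofList (t ++ a :: s)) (FreeMonoid.ofList (a :: (t ++ s))) :=
      ih (fun b hb => hp b (List.mem_cons_of_mem _ hb))
    have h2 : pcCon E I (FreeMonoid.ofList (c :: (t ++ a :: s)))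
        (FreeMonoid.ofList (c :: a :: (t ++ s))) := by
      rw [ofList_cons, ofList_cons]
      exact (pcCon E I).mul ((pcCon E I).refl _) h1
    have h3 : pcCon E I (FreeMonoid.ofList (c :: a :: (t ++ s)))
        (FreeMonoid.ofList (a :: c :: (t ++ s))) := by
      rw [ofList_cons, ofList_cons, ofList_cons, ofList_cons, ← mul_assoc, ← mul_assoc]
      refine (pcCon E I).mul ?_ ((pcCon E I).refl _)
      exact ConGen.Rel.of _ _ ⟨c, a, hsym a c (hp c (List.mem_cons_self)), rfl, rfl⟩
    exact (pcCon E I).trans h2 h3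

lemma projEq_to_pcCon (hirr : ∀ a : E, ¬ I a a) (hsym : ∀ a b : E, I a b → I b a) :
    ∀ u v : List E,
      (∀ a b : E, (a = b ∨ ¬ I a b) → u.filter (pr a b) = v.filter (pr a b)) →
      pcCon E I (FreeMonoid.ofList u) (FreeMonoid.ofList v) := by
  intro u
  induction u with
  | nil =>
    intro v h
    have : v = [] := by
      rw [List.eq_nil_iff_forall_not_mem]
      intro a ha
      have := (h a a (Or.inl rfl)).symm
      simp only [List.filter_nil] at this
      rw [List.filter_eq_nil_iff] at this
      exact this a ha (by simp [pr_iff])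
    rw [this]; exact (pcCon E I).refl _
  | cons a u' ih =>
    intro v h
    have hav : a ∈ v := by
      by_contra hav
      have h1 := h a a (Or.inl rfl)
      rw [List.filter_cons_of_pos (by simp [pr_iff])] at h1
      have h2 : v.filter (pr a a) = [] := by
        rw [List.filter_eq_nil_iff]
        intro c hc hpc
        rw [pr_iff] at hpc
        exact hav (by rcases hpc with h | h <;> exact h ▸ hc)
      rw [h2] at h1; exact List.cons_ne_nil _ _ h1
    obtain ⟨p, s, rfl, hap⟩ := first_occ hav
    have hcomm : ∀ b ∈ p, I a b := by
      intro b hb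
      by_contra hI
      have hba : b ≠ a := fun h => hap (h ▸ hb)
      have h1 := h a b (Or.inr hI)
      rw [List.filter_cons_of_pos (by simp [pr_iff]), List.filter_append,
        List.filter_cons_of_pos (by simp [pr_iff])] at h1
      -- LHS : a :: _, RHS : p.filter ++ a :: _ with p.filter nonempty starting with b
      have hbf : b ∈ p.filter (pr a b) := List.mem_filter.mpr ⟨hb, by simp [pr_iff]⟩
      rcases hf : p.filter (pr a b) with _ | ⟨c, r⟩
      · rw [hf] at hbf; cases hbf
      · rw [hf] at h1
        have hc : c ∈ p.filter (pr a b) := by rw [hf]; exact List.mem_cons_self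
        have hcp := List.mem_filter.mp hc
        have hca : c ≠ a := fun h => hap (h ▸ hcp.1)
        have : c = a ∨ c = b := (pr_iff a b c).mp hcp.2
        have hcb : c = b := this.resolve_left hca
        have := (List.cons.injEq _ _ _ _).mp h1
        exact hba (hcb ▸ this.1.symm)
    have hswap := swap_front (I := I) hsym a s p hcomm
    have hproj2 := pcCon_le_projCon hirr hsym hswap
    have hrest : ∀ a' b' : E, (a' = b' ∨ ¬ I a' b') →
        u'.filter (pr a' b') = (p ++ s).filter (pr a' b') := by
      intro a' b' hab
      have h1 := (h a' b' hab).trans (hproj2 a' b' hab)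
      simp only [FreeMonoid.toList_ofList] at h1
      by_cases hpa : pr a' b' a = true
      · rw [List.filter_cons_of_pos hpa, List.filter_cons_of_pos hpa] at h1
        exact ((List.cons.injEq _ _ _ _).mp h1).2
      · rw [List.filter_cons_of_neg (by simpa using hpa),
          List.filter_cons_of_neg (by simpa using hpa)] at h1
        exact h1
    have hu' := ih (p ++ s) hrest
    have : pcCon E I (FreeMonoid.ofList (a :: u')) (FreeMonoid.ofList (a :: (p ++ s))) := by
      rw [ofList_cons, ofList_cons]
      exact (pcCon E I).mul ((pcCon E I).refl _) hu'
    exact (pcCon E I).trans this ((pcCon E I).symm hswap)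

theorem pcCon_iff (hirr : ∀ a : E, ¬ I a a) (hsym : ∀ a b : E, I a b → I b a)
    (w₁ w₂ : FreeMonoid E) :
    pcCon E I w₁ w₂ ↔ projCon I w₁ w₂ :=
  ⟨fun h => pcCon_le_projCon hirr hsym h,
   fun h => projEq_to_pcCon hirr hsym w₁.toList w₂.toList h⟩
end Mon

section Mon2
variable {E : Type u} {I : E → E → Prop}

lemma pcCon_cancel_right (hirr : ∀ a : E, ¬ I a a) (hsym : ∀ a b : E, I a b → I b a)
    {u v w : FreeMonoid E} (h : pcCon E I (u * w) (v * w)) : pcCon E I u v := by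
  rw [pcCon_iff hirr hsym] at h ⊢
  intro a b hab
  have := h a b hab
  simp only [FreeMonoid.toList_mul, List.filter_append] at this
  exact List.append_cancel_right this

lemma pcCon_cancel_left (hirr : ∀ a : E, ¬ I a a) (hsym : ∀ a b : E, I a b → I b a)
    {u v w : FreeMonoid E} (h : pcCon E I (w * u) (w * v)) : pcCon E I u v := by
  rw [pcCon_iff hirr hsym] at h ⊢
  intro a b hab
  have := h a b hab
  simp only [FreeMonoid.toList_mul, List.filter_append] at this
  exact List.append_cancel_left this

def lenCon (E : Type u) (I : E → E → Prop) : Con (FreeMonoid E) where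
  r u v := u.toList.length = v.toList.length
  iseqv := ⟨fun _ => rfl, Eq.symm, Eq.trans⟩
  mul' {w x y z} h1 h2 := by
    have h1' : (FreeMonoid.toList w).length = (FreeMonoid.toList x).length := h1
    have h2' : (FreeMonoid.toList y).length = (FreeMonoid.toList z).length := h2
    simp only [FreeMonoid.toList_mul, List.length_append, h1', h2']

lemma pcCon_length {u v : FreeMonoid E} (h : pcCon E I u v) :
    u.toList.length = v.toList.length := by
  have hle : pcCon E I ≤ lenCon E I := by
    apply Con.conGen_le.mpr
    rintro _ _ ⟨p, q, _, rfl, rfl⟩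
    show (FreeMonoid.toList (FreeMonoid.of p * FreeMonoid.of q)).length =
      (FreeMonoid.toList (FreeMonoid.of q * FreeMonoid.of p)).length
    simp
  exact hle h

lemma toList_eq_nil {u : FreeMonoid E} (h : FreeMonoid.toList u = []) : u = 1 := by
  have := congrArg FreeMonoid.ofList h
  rwa [FreeMonoid.ofList_toList] at this

-- quotient-level facts
lemma fpcm_cancel_right (hirr : ∀ a : E, ¬ I a a) (hsym : ∀ a b : E, I a b → I b a)
    (p q r : FPCM E I) (h : p * r = q * r) : p = q := by
  obtain ⟨u, rfl⟩ : ∃ u : FreeMonoid E, (u : FPCM E I) = p :=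
    ⟨(Con.mk'_surjective p).choose, (Con.mk'_surjective p).choose_spec⟩
  obtain ⟨v, rfl⟩ : ∃ v : FreeMonoid E, (v : FPCM E I) = q :=
    ⟨(Con.mk'_surjective q).choose, (Con.mk'_surjective q).choose_spec⟩
  obtain ⟨w, rfl⟩ : ∃ w : FreeMonoid E, (w : FPCM E I) = r :=
    ⟨(Con.mk'_surjective r).choose, (Con.mk'_surjective r).choose_spec⟩
  rw [← Con.coe_mul, ← Con.coe_mul, Con.eq] at h
  rw [Con.eq]
  exact pcCon_cancel_right hirr hsym h

lemma fpcm_cancel_left (hirr : ∀ a : E, ¬ I a a) (hsym : ∀ a b : E, I a b → I b a)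
    (p q r : FPCM E I) (h : r * p = r * q) : p = q := by
  obtain ⟨u, rfl⟩ : ∃ u : FreeMonoid E, (u : FPCM E I) = p :=
    ⟨(Con.mk'_surjective p).choose, (Con.mk'_surjective p).choose_spec⟩
  obtain ⟨v, rfl⟩ : ∃ v : FreeMonoid E, (v : FPCM E I) = q :=
    ⟨(Con.mk'_surjective q).choose, (Con.mk'_surjective q).choose_spec⟩
  obtain ⟨w, rfl⟩ : ∃ w : FreeMonoid E, (w : FPCM E I) = r :=
    ⟨(Con.mk'_surjective r).choose, (Con.mk'_surjective r).choose_spec⟩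
  rw [← Con.coe_mul, ← Con.coe_mul, Con.eq] at h
  rw [Con.eq]
  exact pcCon_cancel_left hirr hsym h

lemma fpcm_unit (p q : FPCM E I) (h : p * q = 1) : p = 1 ∧ q = 1 := by
  obtain ⟨u, rfl⟩ : ∃ u : FreeMonoid E, (u : FPCM E I) = p :=
    ⟨(Con.mk'_surjective p).choose, (Con.mk'_surjective p).choose_spec⟩
  obtain ⟨v, rfl⟩ : ∃ v : FreeMonoid E, (v : FPCM E I) = q :=
    ⟨(Con.mk'_surjective q).choose, (Con.mk'_surjective q).choose_spec⟩
  rw [← Con.coe_mul, ← Con.coe_one, Con.eq] at h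
  have hlen := pcCon_length h
  simp only [FreeMonoid.toList_mul, List.length_append, FreeMonoid.toList_one,
    List.length_nil, Nat.add_eq_zero] at hlen
  have hu : u = 1 := toList_eq_nil (List.eq_nil_of_length_eq_zero hlen.1)
  have hv : v = 1 := toList_eq_nil (List.eq_nil_of_length_eq_zero hlen.2)
  rw [hu, hv]
  exact ⟨rfl, rfl⟩
end Mon2

universe v w

/-- The factorization category `𝔉C` of a category `C`, realized as the category of elements
of the hom bifunctor `Cᵒᵖ × C ⥤ Type`. -/
def FactCat (C : Type w) [Category.{v} C] : Type (max w v) :=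
  (Functor.hom C).Elements

instance (C : Type w) [Category.{v} C] : Category (FactCat C) :=
  inferInstanceAs (Category (Functor.hom C).Elements)

/-- The object of `𝔉M` (for a monoid `M` viewed as a one-object category)
corresponding to an element `μ : M`. -/
def factObj (M : Type u) [Monoid M] (μ : M) : FactCat (SingleObj M) :=
  ⟨(Opposite.op (SingleObj.star M), SingleObj.star M), μ⟩


section Cat
variable (M : Type u) [Monoid M] (α : M)

def trip (x β y : M) (h : y * β * x = α) : Over (factObj M α) :=
  Over.mk (X := factObj M α)
    (Y := (⟨(Opposite.op (SingleObj.star M), SingleObj.star M), β⟩ : FactCat (SingleObj M)))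
    ⟨(Opposite.op x, y), h⟩

theorem exists_trip (u : Over (factObj M α)) : ∃ x β y h, u = trip M α x β y h := by
  obtain ⟨⟨⟨⟨⟨⟩⟩,⟨⟩⟩, β⟩, ⟨⟨⟩⟩, ⟨⟨⟨x⟩,y⟩, h⟩⟩ := u
  exact ⟨x, β, y, h, rfl⟩

theorem trip_ext {x β y h x' β' y' h'} (hx : x = x') (hβ : β = β') (hy : y = y') :
    trip M α x β y h = trip M α x' β' y' h' := by
  subst hx; subst hβ; subst hy; rfl

theorem hom_data {x β y h x' β' y' h'} (f : trip M α x β y h ⟶ trip M α x' β' y' h') :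
    ∃ a b : M, b * β * a = β' ∧ x = a * x' ∧ y = y' * b := by
  obtain ⟨⟨⟨⟨a⟩,b⟩,hf⟩, ⟨⟨⟩⟩, hw⟩ := f
  refine ⟨a, b, ?_, ?_, ?_⟩
  · simp only [trip, Over.mk, CostructuredArrow.mk, Functor.hom, SingleObj.comp_as_mul,
      Quiver.Hom.unop_op] at hf
    exact hf
  · have := congrArg (fun g => g.val.1.unop) (hw.trans (Category.comp_id _))
    exact this.symm
  · have := congrArg (fun g => g.val.2) (hw.trans (Category.comp_id _))
    exact this.symm

theorem hom_mk {x β y h x' β' y' h'} (a b : M) (h1 : b * β * a = β') (h2 : x = a * x')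
    (h3 : y = y' * b) : Nonempty (trip M α x β y h ⟶ trip M α x' β' y' h') := by
  refine ⟨⟨⟨(Opposite.op a, b), ?_⟩, 𝟙 _, ?_⟩⟩
  · simp only [trip, Over.mk, CostructuredArrow.mk, Functor.hom, SingleObj.comp_as_mul,
      Quiver.Hom.unop_op]
    exact h1
  · subst h2; subst h3
    simp only [Functor.id_map]
    refine Eq.trans ?_ (Category.comp_id _).symm
    apply Subtype.ext
    rfl

theorem hom_eq {x β y h x' β' y' h'}
    (hcr : ∀ p q r : M, p * r = q * r → p = q) (hcl : ∀ p q r : M, r * p = r * q → p = q)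
    (f g : trip M α x β y h ⟶ trip M α x' β' y' h') : f = g := by
  obtain ⟨⟨⟨⟨a⟩,b⟩,hf⟩, ⟨⟨⟩⟩, hw⟩ := f
  obtain ⟨⟨⟨⟨a'⟩,b'⟩,hf'⟩, ⟨⟨⟩⟩, hw'⟩ := g
  have e2 : x = a * x' := by
    have := congrArg (fun g => g.val.1.unop) (hw.trans (Category.comp_id _)); exact this.symm
  have e3 : y = y' * b := by
    have := congrArg (fun g => g.val.2) (hw.trans (Category.comp_id _)); exact this.symm
  have e2' : x = a' * x' := by
    have := congrArg (fun g => g.val.1.unop) (hw'.trans (Category.comp_id _)); exact this.symm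
  have e3' : y = y' * b' := by
    have := congrArg (fun g => g.val.2) (hw'.trans (Category.comp_id _)); exact this.symm
  have ha : a = a' := hcr a a' x' (e2.symm.trans e2')
  have hb : b = b' := hcl b b' y' (e3.symm.trans e3')
  subst ha; subst hb
  rfl
end Cat

section Cat2
variable (M : Type u) [Monoid M] (α : M)

theorem antisym_trip (hcr : ∀ p q r : M, p * r = q * r → p = q)
    (hcl : ∀ p q r : M, r * p = r * q → p = q)
    (hunit : ∀ p q : M, p * q = 1 → p = 1 ∧ q = 1)
    (u v : Over (factObj M α)) (f : u ⟶ v) (g : v ⟶ u) : u = v := by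
  obtain ⟨x, β, y, h, rfl⟩ := exists_trip M α u
  obtain ⟨x', β', y', h', rfl⟩ := exists_trip M α v
  obtain ⟨a, b, hb1, hb2, hb3⟩ := hom_data M α f
  obtain ⟨c, d, hc1, hc2, hc3⟩ := hom_data M α g
  have hx : (a * c) * x = 1 * x := by
    rw [one_mul, mul_assoc, ← hc2, ← hb2]
  have hac := hunit a c (hcr _ _ _ hx)
  have hy : y * (d * b) = y * 1 := by
    rw [mul_one, ← mul_assoc, ← hc3, ← hb3]
  have hdb := hunit d b (hcl _ _ _ hy)
  have ha : a = 1 := hac.1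
  have hbb : b = 1 := hdb.2
  refine trip_ext M α ?_ ?_ ?_
  · rw [hb2, ha, one_mul]
  · rw [← hb1, ha, hbb, one_mul, mul_one]
  · rw [hb3, hbb, mul_one]

def eqv : Over (factObj M α) ≃ {p : M × M × M // p.1 * p.2.1 * p.2.2 = α} where
  toFun u := match u with
    | ⟨⟨⟨⟨⟨⟩⟩,⟨⟩⟩, β⟩, _, ⟨⟨⟨x⟩,y⟩, h⟩⟩ => ⟨(y, β, x), h⟩
  invFun p := trip M α p.1.2.2 p.1.2.1 p.1.1 p.2
  left_inv u := by
    obtain ⟨⟨⟨⟨⟨⟩⟩,⟨⟩⟩, β⟩, ⟨⟨⟩⟩, ⟨⟨⟨x⟩,y⟩, h⟩⟩ := u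
    rfl
  right_inv p := rfl
end Cat2

/-- **Proposition (comp).**  For every element `α` of the free partially commutative monoid
`M(E, I)` (viewed as a one-object category), the comma category `𝔉M(E,I)/α` is a partially
ordered set, whose elements may be identified with the triples `(x, β, y)` of elements of
`M(E,I)` with `x·β·y = α`. -/
theorem fpcm_factorization_comma_is_poset (E : Type u) (I : E → E → Prop)
    (hirr : ∀ a : E, ¬ I a a) (hsym : ∀ a b : E, I a b → I b a)
    (α : FPCM E I) :
    (∀ (u v : Over (factObj (FPCM E I) α)) (f g : u ⟶ v), f = g) ∧
    (∀ (u v : Over (factObj (FPCM E I) α)), (u ⟶ v) → (v ⟶ u) → u = v) ∧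
    Nonempty (Over (factObj (FPCM E I) α) ≃
      {p : FPCM E I × FPCM E I × FPCM E I // p.1 * p.2.1 * p.2.2 = α}) := by
  refine ⟨?_, ?_, ⟨eqv (FPCM E I) α⟩⟩
  · intro u v f g
    obtain ⟨x, β, y, h, rfl⟩ := exists_trip (FPCM E I) α u
    obtain ⟨x', β', y', h', rfl⟩ := exists_trip (FPCM E I) α v
    exact hom_eq _ _ (fpcm_cancel_right hirr hsym) (fpcm_cancel_left hirr hsym) f g
  · exact antisym_trip (FPCM E I) α (fpcm_cancel_right hirr hsym)
      (fpcm_cancel_left hirr hsym) (fpcm_unit)
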